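/- For 1.8 ≤ λ < 2, write λ = 2cos²θ with 0 < θ < π/4, and let c_λ = A_λ B₂⁻¹ acting on ℝ ∪ {∞}. Then for every integer k with 0 ≤ k ≤ 1/(4θ), the point c_λ^k(5/4) lies in X₂ = {x ∈ ℝ : |x| > 1} ∪ {∞}; consequently c_λ^k K₂ ⊆ X₂ where K₂ = {x ∈ ℝ : |x| ≥ 5/4} ∪ {∞}. -/

import Mathlib

open OnePoint

/-- The matrix `A_λ = [[1,λ],[0,1]]` in `SL₂(ℝ)`. -/
def AmatR (lam : ℝ) : Matrix.SpecialLinearGroup (Fin 2) ℝ :=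
  ⟨!![1, lam; 0, 1], by simp [Matrix.det_fin_two_of]⟩

/-- The matrix `B_μ = [[1,0],[μ,1]]` in `SL₂(ℝ)`. -/
def BmatR (mu : ℝ) : Matrix.SpecialLinearGroup (Fin 2) ℝ :=
  ⟨!![1, 0; mu, 1], by simp [Matrix.det_fin_two_of]⟩

/-- The action of `SL₂(ℝ)` on the real projective line `ℝ ∪ {∞}` by Möbius
transformations. -/
noncomputable def moebiusR (g : Matrix.SpecialLinearGroup (Fin 2) ℝ) (z : OnePoint ℝ) :
    OnePoint ℝ :=
  OnePoint.rec
    (if g.1 1 0 = 0 then ∞ else ((g.1 0 0 / g.1 1 0 : ℝ) : OnePoint ℝ))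
    (fun w => if g.1 1 0 * w + g.1 1 1 = 0 then ∞
      else (((g.1 0 0 * w + g.1 0 1) / (g.1 1 0 * w + g.1 1 1) : ℝ) : OnePoint ℝ)) z

/-!
With `λ = 2 cos² θ` one has `c_λ = -(cos 2θ + sin 2θ J)` for a matrix `J` with `J² = -1`, so
by de Moivre `c_λ^k = ±(cos t + sin t J)` with `t = 2kθ ≤ 1/2`. Up to a scalar this is
`[[cos θ sin (θ + t), -cos² θ sin t], [sin t, cos θ sin (θ - t)]]`. For `|w| ≥ 5/4` the
difference of the squares of the numerator and the denominator of `c_λ^k w` factors into two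
affine functions of `w`, each having the sign of `w` because `5 sin θ sin t < cos θ cos t`; this
last inequality holds since `cos² θ ≥ 0.9` and `t ≤ 1/2`.
-/

open Real

theorem cos_add_sin_smul_pow {A : Type*} [Ring A] [Algebra ℝ A] {J : A} (hJ : J * J = -1)
    (a : ℝ) (k : ℕ) :
    (algebraMap ℝ A (cos a) + sin a • J) ^ k =
      algebraMap ℝ A (cos (k * a)) + sin (k * a) • J := by
  induction k with
  | zero => simp
  | succ n ih =>
    rw [pow_succ, ih, Nat.cast_succ, add_one_mul, cos_add, sin_add]
    simp only [Algebra.algebraMap_eq_smul_one, add_mul, mul_add, smul_mul_smul_comm, one_mul,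
      mul_one, hJ]
    module

theorem coe_AmatR_mul_BmatR_inv (lam mu : ℝ) :
    ((AmatR lam * (BmatR mu)⁻¹ : Matrix.SpecialLinearGroup (Fin 2) ℝ) :
      Matrix (Fin 2) (Fin 2) ℝ) = !![1 - lam * mu, lam; -mu, 1] := by
  rw [Matrix.SpecialLinearGroup.coe_mul, Matrix.SpecialLinearGroup.coe_inv]
  simp [AmatR, BmatR, Matrix.adjugate_fin_two, sub_eq_add_neg]

theorem coe_AmatR_mul_BmatR_inv_pow {θ : ℝ} (hs : sin θ ≠ 0) (hc : cos θ ≠ 0) (k : ℕ) :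
    (((AmatR (2 * cos θ ^ 2) * (BmatR 2)⁻¹) ^ k : Matrix.SpecialLinearGroup (Fin 2) ℝ) :
      Matrix (Fin 2) (Fin 2) ℝ) =
      ((-1) ^ k / (sin θ * cos θ)) •
        !![cos θ * sin (θ + k * (2 * θ)), -(cos θ ^ 2 * sin (k * (2 * θ)));
          sin (k * (2 * θ)), cos θ * sin (θ - k * (2 * θ))] := by
  set J : Matrix (Fin 2) (Fin 2) ℝ :=
    !![cos θ / sin θ, -(cos θ / sin θ); (sin θ * cos θ)⁻¹, -(cos θ / sin θ)]
  have hJ : J * J = -1 := by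
    ext i j
    fin_cases i <;> fin_cases j <;> simp [J] <;> field_simp <;>
      linarith [sin_sq_add_cos_sq θ]
  have hJc : ((AmatR (2 * cos θ ^ 2) * (BmatR 2)⁻¹ : Matrix.SpecialLinearGroup (Fin 2) ℝ) :
      Matrix (Fin 2) (Fin 2) ℝ) =
        (-1 : ℝ) • (algebraMap ℝ _ (cos (2 * θ)) + sin (2 * θ) • J) := by
    rw [coe_AmatR_mul_BmatR_inv]
    ext i j
    fin_cases i <;> fin_cases j <;> simp [J, Matrix.algebraMap_matrix_apply] <;>
      simp only [cos_two_mul, sin_two_mul] <;> field_simp <;> linarith [sin_sq_add_cos_sq θ]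
  rw [Matrix.SpecialLinearGroup.coe_pow, hJc, smul_pow, cos_add_sin_smul_pow hJ]
  ext i j
  fin_cases i <;> fin_cases j <;>
    simp [J, sin_add, sin_sub, Matrix.algebraMap_matrix_apply] <;> field_simp
  ring

def X₂ : Set (OnePoint ℝ) := ((↑) : ℝ → OnePoint ℝ) '' {x : ℝ | 1 < |x|} ∪ {∞}

theorem ite_div_mem_X₂ {p q : ℝ} (h : q ^ 2 < p ^ 2) :
    (if q = 0 then ∞ else ((p / q : ℝ) : OnePoint ℝ)) ∈ X₂ := by
  split_ifs with hq
  · exact Or.inr rfl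
  · exact Or.inl ⟨p / q, show 1 < |p / q| by
      rwa [abs_div, one_lt_div (abs_pos.mpr hq), ← sq_lt_sq], rfl⟩

section Moebius

variable {g : Matrix.SpecialLinearGroup (Fin 2) ℝ} {r a b c d : ℝ}

theorem moebiusR_coe_mem_X₂ (hr : r ≠ 0)
    (hg : (g : Matrix (Fin 2) (Fin 2) ℝ) = r • !![a, b; c, d]) {w : ℝ}
    (h : (c * w + d) ^ 2 < (a * w + b) ^ 2) : moebiusR g w ∈ X₂ := by
  show (if _ then ∞ else _) ∈ X₂
  simp only [hg, Matrix.smul_apply, Matrix.of_apply, Matrix.cons_val', Matrix.cons_val_zero,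
    Matrix.cons_val_one, smul_eq_mul]
  refine ite_div_mem_X₂ ?_
  calc (r * c * w + r * d) ^ 2 = r ^ 2 * (c * w + d) ^ 2 := by ring
    _ < r ^ 2 * (a * w + b) ^ 2 := by gcongr
    _ = (r * a * w + r * b) ^ 2 := by ring

theorem moebiusR_infty_mem_X₂ (hr : r ≠ 0)
    (hg : (g : Matrix (Fin 2) (Fin 2) ℝ) = r • !![a, b; c, d]) 
    (h : c ^ 2 < a ^ 2) : moebiusR g ∞ ∈ X₂ := by
  show (if _ then ∞ else _) ∈ X₂
  simp only [hg, Matrix.smul_apply, Matrix.of_apply, Matrix.cons_val', Matrix.cons_val_zero,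
    Matrix.cons_val_one, smul_eq_mul]
  refine ite_div_mem_X₂ ?_
  calc (r * c) ^ 2 = r ^ 2 * c ^ 2 := by ring
    _ < r ^ 2 * a ^ 2 := by gcongr
    _ = (r * a) ^ 2 := by ring

end Moebius

section RotationEstimates

variable {θ t : ℝ}

theorem five_mul_sin_mul_sin_lt (hc : 0 < cos θ) (hcos : 9 / 10 ≤ cos θ ^ 2) (ht₀ : 0 ≤ t)
    (ht : t ≤ 1 / 2) : 5 * (sin θ * sin t) < cos θ * cos t := by
  have h3 : 3 * sin θ ≤ cos θ := by nlinarith [sin_sq_add_cos_sq θ]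
  have hsin₀ : 0 ≤ sin t := sin_nonneg_of_nonneg_of_le_pi ht₀ (by linarith [pi_gt_three])
  have hsin : sin t ≤ 1 / 2 := (sin_le ht₀).trans ht
  have hcos_t : 7 / 8 ≤ cos t := by nlinarith [one_sub_sq_div_two_le_cos (x := t)]
  nlinarith [mul_le_mul_of_nonneg_right h3 hsin₀]

theorem cos_add_pos_of_five_mul_sin_mul_sin_lt (hs : 0 ≤ sin θ) (hsin : 0 ≤ sin t)
    (hK : 5 * (sin θ * sin t) < cos θ * cos t) : 0 < cos (θ + t) := by
  rw [cos_add]; nlinarith [mul_nonneg hs hsin]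

theorem cos_mul_sin_add_sub_sin : cos θ * sin (θ + t) - sin t = sin θ * cos (θ + t) := by
  rw [sin_add, cos_add]; linear_combination sin t * sin_sq_add_cos_sq θ

theorem sin_lt_cos_mul_sin_add (hs : 0 < sin θ) (hsin : 0 ≤ sin t)
    (hK : 5 * (sin θ * sin t) < cos θ * cos t) : sin t < cos θ * sin (θ + t) := by
  have := mul_pos hs (cos_add_pos_of_five_mul_sin_mul_sin_lt hs.le hsin hK)
  linarith [cos_mul_sin_add_sub_sin (θ := θ) (t := t)]

theorem sq_lt_sq_of_five_quarters_le_abs (hs : 0 < sin θ) (hsin : 0 ≤ sin t)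
    (hK : 5 * (sin θ * sin t) < cos θ * cos t) {w : ℝ} (hw : 5 / 4 ≤ |w|) :
    (sin t * w + cos θ * sin (θ - t)) ^ 2 <
      (cos θ * sin (θ + t) * w + -(cos θ ^ 2 * sin t)) ^ 2 := by
  have hA := cos_add_pos_of_five_mul_sin_mul_sin_lt hs.le hsin hK
  have hX : 0 < cos θ * sin (θ + t) + sin t := by
    linarith [sin_lt_cos_mul_sin_add hs hsin hK]
  have hct : 0 < sin θ * (cos θ * cos t) := mul_pos hs (by nlinarith [mul_nonneg hs.le hsin])
  have hsin_sq : 0 ≤ (1 - cos θ ^ 2) * sin t :=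
    mul_nonneg (sub_nonneg.mpr (cos_sq_le_one θ)) hsin
  have hexp : cos θ * sin (θ + t) = sin θ * cos θ * cos t + cos θ ^ 2 * sin t := by
    rw [sin_add]; ring
  have hdiff :
      (cos θ * sin (θ + t) * w + -(cos θ ^ 2 * sin t)) - (sin t * w + cos θ * sin (θ - t)) =
        sin θ * (cos (θ + t) * w - cos θ * cos t) := by
    rw [sin_sub]; linear_combination w * cos_mul_sin_add_sub_sin (θ := θ) (t := t)
  have hsum :
      (cos θ * sin (θ + t) * w + -(cos θ ^ 2 * sin t)) + (sin t * w + cos θ * sin (θ - t)) =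
        (cos θ * sin (θ + t) + sin t) * w + cos θ * (sin θ * cos t - 2 * cos θ * sin t) := by
    rw [sin_sub]; ring
  rw [← sub_pos, sq_sub_sq, hdiff, hsum]
  rcases le_abs'.mp hw with hw | hw
  · refine mul_pos_of_neg_of_neg ?_ (mul_neg_of_pos_of_neg hs ?_)
    · nlinarith [mul_le_mul_of_nonneg_left hw hX.le]
    · nlinarith [mul_le_mul_of_nonneg_left hw hA.le]
  · refine mul_pos ?_ (mul_pos hs ?_)
    · nlinarith [mul_le_mul_of_nonneg_left hw hX.le]
    · nlinarith [mul_le_mul_of_nonneg_left hw hA.le, cos_add θ t]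

end RotationEstimates

theorem stmt_16_general (lam θ : ℝ) (h1 : 1.8 ≤ lam)
    (hθ : 0 < θ) (hθ2 : θ < Real.pi / 4) (hlam : lam = 2 * Real.cos θ ^ 2)
    (k : ℕ) (hk : (k : ℝ) ≤ 1 / (4 * θ)) :
    moebiusR ((AmatR lam * (BmatR 2)⁻¹) ^ k) (((5 / 4 : ℝ) : OnePoint ℝ)) ∈
      (((↑) : ℝ → OnePoint ℝ) '' {x : ℝ | 1 < |x|} ∪ {∞}) ∧
    ∀ z ∈ (((↑) : ℝ → OnePoint ℝ) '' {x : ℝ | 5 / 4 ≤ |x|} ∪ {∞}),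
      moebiusR ((AmatR lam * (BmatR 2)⁻¹) ^ k) z ∈
        (((↑) : ℝ → OnePoint ℝ) '' {x : ℝ | 1 < |x|} ∪ {∞}) := by
  subst hlam
  have hc : 0 < cos θ := cos_pos_of_mem_Ioo ⟨by linarith, by linarith [pi_pos]⟩
  have hs : 0 < sin θ := sin_pos_of_pos_of_lt_pi hθ (by linarith [pi_pos])
  have ht₀ : 0 ≤ k * (2 * θ) := by positivity
  have ht : k * (2 * θ) ≤ 1 / 2 := by
    rw [le_div_iff₀ (by positivity)] at hk
    linarith
  have hangle := five_mul_sin_mul_sin_lt hc (by norm_num at h1; linarith) ht₀ ht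
  have hsin := sin_nonneg_of_nonneg_of_le_pi ht₀ (by linarith [pi_gt_three])
  have hr : (-1) ^ k / (sin θ * cos θ) ≠ 0 := by positivity
  have hg := coe_AmatR_mul_BmatR_inv_pow hs.ne' hc.ne' k
  have hK₂ : ∀ z ∈ (((↑) : ℝ → OnePoint ℝ) '' {x : ℝ | 5 / 4 ≤ |x|} ∪ {∞}),
      moebiusR ((AmatR (2 * cos θ ^ 2) * (BmatR 2)⁻¹) ^ k) z ∈ X₂ := by
    rintro z (⟨w, hw, rfl⟩ | rfl)
    · exact moebiusR_coe_mem_X₂ hr hg (sq_lt_sq_of_five_quarters_le_abs hs hsin hangle hw)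
    · exact moebiusR_infty_mem_X₂ hr hg
        (pow_lt_pow_left₀ (sin_lt_cos_mul_sin_add hs hsin hangle) hsin two_ne_zero)
  exact ⟨hK₂ _ (Or.inl ⟨5 / 4, by norm_num [abs_of_pos], rfl⟩), hK₂⟩

/-- for `1.8 ≤ λ < 2` with `λ = 2cos²θ`, `0 < θ < π/4`, and
`c_λ = A_λ B₂⁻¹`, for every integer `0 ≤ k ≤ 1/(4θ)` the point `c_λ^k(5/4)` lies in
`X₂ = {|x| > 1} ∪ {∞}`; consequently `c_λ^k K₂ ⊆ X₂` where `K₂ = {|x| ≥ 5/4} ∪ {∞}`. -/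
theorem stmt_16 (lam θ : ℝ) (h1 : 1.8 ≤ lam) (h2 : lam < 2)
    (hθ : 0 < θ) (hθ2 : θ < Real.pi / 4) (hlam : lam = 2 * Real.cos θ ^ 2)
    (k : ℕ) (hk : (k : ℝ) ≤ 1 / (4 * θ)) :
    moebiusR ((AmatR lam * (BmatR 2)⁻¹) ^ k) (((5 / 4 : ℝ) : OnePoint ℝ)) ∈
      (((↑) : ℝ → OnePoint ℝ) '' {x : ℝ | 1 < |x|} ∪ {∞}) ∧
    ∀ z ∈ (((↑) : ℝ → OnePoint ℝ) '' {x : ℝ | 5 / 4 ≤ |x|} ∪ {∞}),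
      moebiusR ((AmatR lam * (BmatR 2)⁻¹) ^ k) z ∈
        (((↑) : ℝ → OnePoint ℝ) '' {x : ℝ | 1 < |x|} ∪ {∞}) :=
  stmt_16_general lam θ h1 hθ hθ2 hlam k hk
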